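/- Assume (f), (D1), (g0) and (Dg), set q := D·g, let c* be the threshold for problem (P_c⁰⁰), let c ≥ c*, and let z be the solution of (P_c⁰⁰) (so z(0) = z(1) = 0). Then lim_{φ→1⁻} D(φ)/z(φ) = [ h(1) − c − √( (h(1) − c)² − 4 Ḋ(1) g(1) ) ] / (2 g(1)) if Ḋ(1) < 0, and lim_{φ→1⁻} D(φ)/z(φ) = min{ 0 , (h(1) − c)/g(1) } if Ḋ(1) = 0. -/

import Mathlib

/-!
Near `φ = 1` the quotient `u = D/z` satisfies the Riccati-type equation `u' = P_φ(u)/z` with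
`P_φ(v) = g(φ)v² − (h(φ) − c)v + Ḋ(φ)`. As long as `u` stays bounded below, `z' = h − c − g u`
is bounded above, so `z(1) = 0` gives `0 < −z(φ) ≤ K(1 − φ)`. Hence on any compact band of
values where `P_1` has a strict sign, `|u'| ≥ δ/(K(1 − φ))` with a fixed sign, whose integral
diverges logarithmically: `u` cannot stay in such a band up to `φ = 1`. The sign of `P_φ` at a
fixed level also makes that level a one-sided barrier for `u`. Together these squeeze `u` onto
the root `ℓ ≤ 0` of `P_1` that separates `P_1 > 0` (below) from `P_1 < 0` (above): the smaller root
if `Ḋ(1) < 0`, and `min 0 ((h(1) − c)/g(1))` if `Ḋ(1) = 0`.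

Two a priori bounds are needed. From below: if `u ≤ −M` with `M` large, then `−z(φ) ≳ M(1 − φ)`
and `D = u z ≳ M²(1 − φ)`, contradicting `D(φ) = O(1 − φ)`. From above, when `Ḋ(1) = 0` and
`h(1) < c`, so that `P_1(0) = 0`: if `u ≥ ℓ/2` then `z' ≤ h − c − g ℓ/2 < 0`, which is
incompatible with `z < 0 = z(1)`.
-/

open Set Filter Topology MeasureTheory

noncomputable section

/-- `z` is a solution of the singular first-order ODE ż(φ) = h(φ) − c − q(φ)/z(φ)
on (0,1), negative on (0,1), and continuous on [0,1]. -/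
def SolODE (h q : ℝ → ℝ) (c : ℝ) (z : ℝ → ℝ) : Prop :=
  ContinuousOn z (Icc 0 1) ∧
  (∀ φ ∈ Ioo (0:ℝ) 1, HasDerivAt z (h φ - c - q φ / z φ) φ) ∧
  (∀ φ ∈ Ioo (0:ℝ) 1, z φ < 0)

/-- Problem (P_c): the singular ODE with the left boundary condition z(0) = 0. -/
def PC (h q : ℝ → ℝ) (c : ℝ) (z : ℝ → ℝ) : Prop :=
  SolODE h q c z ∧ z 0 = 0

/-- Problem (P_c⁰⁰): the singular ODE with the two boundary conditions z(0) = z(1) = 0. -/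
def PC00 (h q : ℝ → ℝ) (c : ℝ) (z : ℝ → ℝ) : Prop :=
  PC h q c z ∧ z 1 = 0

lemma sub_le_mul_sub_of_hasDerivAt_le {f f' : ℝ → ℝ} {a b C : ℝ} (hab : a ≤ b)
    (hf : ContinuousOn f (Icc a b)) (hf' : ∀ x ∈ Ioo a b, HasDerivAt f (f' x) x)
    (hC : ∀ x ∈ Ioo a b, f' x ≤ C) : f b - f a ≤ C * (b - a) := by
  rw [← interior_Icc] at hf' hC
  exact (convex_Icc a b).image_sub_le_mul_sub_of_deriv_le hf
    (fun x hx => (hf' x hx).differentiableAt.differentiableWithinAt)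
    (fun x hx => (hf' x hx).deriv ▸ hC x hx) a (left_mem_Icc.2 hab) b (right_mem_Icc.2 hab) hab

lemma mul_sub_le_sub_of_le_hasDerivAt {f f' : ℝ → ℝ} {a b C : ℝ} (hab : a ≤ b)
    (hf : ContinuousOn f (Icc a b)) (hf' : ∀ x ∈ Ioo a b, HasDerivAt f (f' x) x)
    (hC : ∀ x ∈ Ioo a b, C ≤ f' x) : C * (b - a) ≤ f b - f a := by
  rw [← interior_Icc] at hf' hC
  exact (convex_Icc a b).mul_sub_le_image_sub_of_le_deriv hf
    (fun x hx => (hf' x hx).differentiableAt.differentiableWithinAt)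
    (fun x hx => (hf' x hx).deriv ▸ hC x hx) a (left_mem_Icc.2 hab) b (right_mem_Icc.2 hab) hab

lemma le_of_hasDerivAt_neg_of_eq {u u' : ℝ → ℝ} {a b μ : ℝ}
    (hu : ∀ t ∈ Ico a b, HasDerivAt u (u' t) t) (ha : u a ≤ μ)
    (hμ : ∀ t ∈ Ico a b, u t = μ → u' t < 0) : ∀ t ∈ Ico a b, u t ≤ μ := by
  intro t ht
  have hsub : Icc a t ⊆ Ico a b := Icc_subset_Ico_right ht.2
  exact image_le_of_deriv_right_lt_deriv_boundary' (B := fun _ => μ) (B' := 0)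
    (fun x hx => (hu x (hsub hx)).continuousAt.continuousWithinAt)
    (fun x hx => (hu x (hsub (Ico_subset_Icc_self hx))).hasDerivWithinAt) ha
    continuousOn_const (fun _ _ => hasDerivWithinAt_const _ _ _)
    (fun x hx => hμ x (hsub (Ico_subset_Icc_self hx))) ⟨ht.1, le_rfl⟩

lemma le_of_hasDerivAt_pos_of_eq {u u' : ℝ → ℝ} {a b μ : ℝ}
    (hu : ∀ t ∈ Ico a b, HasDerivAt u (u' t) t) (ha : μ ≤ u a)
    (hμ : ∀ t ∈ Ico a b, u t = μ → 0 < u' t) : ∀ t ∈ Ico a b, μ ≤ u t := by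
  have := le_of_hasDerivAt_neg_of_eq (u := fun t => -u t) (μ := -μ)
    (fun t ht => (hu t ht).neg) (neg_le_neg ha)
    (fun t ht hut => neg_neg_of_pos (hμ t ht (neg_inj.1 hut)))
  exact fun t ht => neg_le_neg_iff.1 (this t ht)

lemma tendsto_sub_nhdsLT_nhdsGT_zero (b : ℝ) :
    Tendsto (fun t => b - t) (𝓝[<] b) (𝓝[>] 0) := by
  have hcont : Tendsto (fun t => b - t) (𝓝 b) (𝓝 0) := by
    simpa using (continuous_const.sub continuous_id).tendsto (f := fun t : ℝ => b - t) b
  exact tendsto_nhdsWithin_iff.2 ⟨hcont.mono_left nhdsWithin_le_nhds,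
    eventually_nhdsWithin_of_forall fun _ ht => sub_pos.2 (mem_Iio.1 ht)⟩

lemma tendsto_atTop_of_div_sub_le_deriv {u u' : ℝ → ℝ} {a b η : ℝ} (hab : a < b) (hη : 0 < η)
    (hu : ∀ t ∈ Ico a b, HasDerivAt u (u' t) t) (hu' : ∀ t ∈ Ico a b, η / (b - t) ≤ u' t) :
    Tendsto u (𝓝[<] b) atTop := by
  have hlog : ∀ t ∈ Ico a b, HasDerivAt (fun t => η * Real.log (b - t)) (η * (-1 / (b - t))) t :=
    fun t ht => (((hasDerivAt_id t).const_sub b).log (sub_pos.2 ht.2).ne').const_mul η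
  have hmono : MonotoneOn (fun t => u t + η * Real.log (b - t)) (Ico a b) := by
    refine monotoneOn_of_hasDerivWithinAt_nonneg (convex_Ico a b)
      (fun t ht => ((hu t ht).add (hlog t ht)).continuousAt.continuousWithinAt)
      (fun t ht =>
        ((hu t (interior_subset ht)).add (hlog t (interior_subset ht))).hasDerivWithinAt)
      (fun t ht => ?_)
    have := hu' t (interior_subset ht)
    rw [mul_div, mul_neg_one, neg_div]
    linarith
  have hlower : ∀ t ∈ Ico a b, u a + η * Real.log (b - a) - η * Real.log (b - t) ≤ u t :=
    fun t ht => by linarith [hmono (left_mem_Ico.2 hab) ht ht.1]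
  refine tendsto_atTop_mono' _ (eventually_of_mem (Ico_mem_nhdsLT hab) hlower) ?_
  exact tendsto_atTop_add_const_left _ _ <| (Real.tendsto_log_nhdsGT_zero.comp
    (tendsto_sub_nhdsLT_nhdsGT_zero b)).const_mul_atBot_of_neg (neg_neg_of_pos hη) |>.congr
    fun t => by simp [sub_eq_add_neg]

lemma exists_pos_eventually_forall_le {X Y : Type*} [TopologicalSpace X] [TopologicalSpace Y]
    {F : X → Y → ℝ} (hF : Continuous (Function.uncurry F)) {K : Set Y} (hK : IsCompact K)
    {x₀ : X} (hpos : ∀ y ∈ K, 0 < F x₀ y) : ∃ δ > 0, ∀ᶠ x in 𝓝 x₀, ∀ y ∈ K, δ ≤ F x y := by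
  obtain ⟨δ, hδ, hδF⟩ :=
    hK.exists_forall_le' (hF.comp (Continuous.prodMk_right x₀)).continuousOn hpos
  refine ⟨δ / 2, half_pos hδ, hK.eventually_forall_of_forall_eventually fun y hy => ?_⟩
  have hy' : δ / 2 < F x₀ y := by linarith [show δ ≤ F x₀ y from hδF y hy]
  exact (hF.tendsto (x₀, y)).eventually (lt_mem_nhds hy') |>.mono fun _ h => h.le

lemma eventually_forall_Ico_of_eventually_nhdsLT {p : ℝ → Prop} {b : ℝ}
    (hp : ∀ᶠ x in 𝓝[<] b, p x) : ∀ᶠ y in 𝓝[<] b, ∀ x ∈ Ico y b, p x := by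
  obtain ⟨a, ha, hab⟩ := (mem_nhdsLT_iff_exists_Ioo_subset).1 hp
  exact eventually_of_mem (Ioo_mem_nhdsLT ha) fun y hy x hx => hab ⟨hy.1.trans_le hx.1, hx.2⟩

lemma tendsto_nhdsLT_of_continuousOn_Icc {f : ℝ → ℝ} {a b : ℝ} (hab : a < b)
    (hf : ContinuousOn f (Icc a b)) : Tendsto f (𝓝[<] b) (𝓝 (f b)) :=
  (hf b (right_mem_Icc.2 hab.le)).tendsto.mono_left (nhdsWithin_le_of_mem (Icc_mem_nhdsLT hab))

lemma quadratic_sign_of_const_neg {a b d : ℝ} (ha : 0 < a) (hd : d < 0) :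
    (∀ v < (b - √(b ^ 2 - 4 * d * a)) / (2 * a), 0 < a * v ^ 2 - b * v + d) ∧
    ∀ v ∈ Ioc ((b - √(b ^ 2 - 4 * d * a)) / (2 * a)) 0, a * v ^ 2 - b * v + d < 0 := by
  set s := √(b ^ 2 - 4 * d * a)
  have hs : s ^ 2 = b ^ 2 - 4 * d * a := Real.sq_sqrt (by nlinarith [sq_nonneg b])
  have hfactor : ∀ v, a * v ^ 2 - b * v + d
      = a * (v - (b - s) / (2 * a)) * (v - (b + s) / (2 * a)) := fun v => by
    field_simp
    linear_combination hs
  have hroots : (b - s) / (2 * a) * ((b + s) / (2 * a)) = d / a := by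
    field_simp
    linear_combination -hs
  have hs0 : 0 ≤ s := Real.sqrt_nonneg _
  have hr₁ : (b - s) / (2 * a) < 0 := by
    by_contra! h
    have : 0 ≤ (b - s) / (2 * a) * ((b + s) / (2 * a)) :=
      mul_nonneg h (h.trans (div_le_div_of_nonneg_right (by linarith) (by linarith)))
    linarith [div_neg_of_neg_of_pos hd ha]
  have hr₂ : 0 < (b + s) / (2 * a) := by
    by_contra! h
    nlinarith [div_neg_of_neg_of_pos hd ha]
  refine ⟨fun v hv => ?_, fun v hv => ?_⟩
  · rw [hfactor]
    exact mul_pos_of_neg_of_neg (mul_neg_of_pos_of_neg ha (by linarith)) (by linarith)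
  · rw [hfactor]
    exact mul_neg_of_pos_of_neg (mul_pos ha (by linarith [hv.1])) (by linarith [hv.2])

/-- `D / z` solves `u' = ratioPoly g h D' c t u / z t`. -/
def ratioPoly (g h D' : ℝ → ℝ) (c t v : ℝ) : ℝ := g t * v ^ 2 - (h t - c) * v + D' t

structure SingularEndpoint (h D D' g z : ℝ → ℝ) (c : ℝ) : Prop where
  tendsto_h : Tendsto h (𝓝[<] 1) (𝓝 (h 1))
  tendsto_g : Tendsto g (𝓝[<] 1) (𝓝 (g 1))
  tendsto_D' : Tendsto D' (𝓝[<] 1) (𝓝 (D' 1))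
  g_one_pos : 0 < g 1
  hasDerivAt_D : ∀ x ∈ Ioo (0 : ℝ) 1, HasDerivAt D (D' x) x
  continuousOn_D : ContinuousOn D (Icc 0 1)
  D_pos : ∀ x ∈ Ioo (0 : ℝ) 1, 0 < D x
  D_one : D 1 = 0
  continuousOn_z : ContinuousOn z (Icc 0 1)
  hasDerivAt_z : ∀ x ∈ Ioo (0 : ℝ) 1, HasDerivAt z (h x - c - D x * g x / z x) x
  z_neg : ∀ x ∈ Ioo (0 : ℝ) 1, z x < 0
  z_one : z 1 = 0

namespace SingularEndpoint

variable {h D D' g z : ℝ → ℝ} {c : ℝ}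

lemma of_PC00 (hh : ContinuousOn h (Icc 0 1))
    (hD : ∀ x ∈ Icc (0 : ℝ) 1, HasDerivWithinAt D (D' x) (Icc 0 1) x)
    (hD' : ContinuousOn D' (Icc 0 1)) (hD_pos : ∀ x ∈ Ioo (0 : ℝ) 1, 0 < D x) (hD1 : D 1 = 0)
    (hg : ContinuousOn g (Icc 0 1)) (hg1 : 0 < g 1) (hz : PC00 h (fun φ => D φ * g φ) c z) :
    SingularEndpoint h D D' g z c :=
  let ⟨⟨⟨hz_cont, hz_deriv, hz_neg⟩, _⟩, hz1⟩ := hz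
  { tendsto_h := tendsto_nhdsLT_of_continuousOn_Icc zero_lt_one hh
    tendsto_g := tendsto_nhdsLT_of_continuousOn_Icc zero_lt_one hg
    tendsto_D' := tendsto_nhdsLT_of_continuousOn_Icc zero_lt_one hD'
    g_one_pos := hg1
    hasDerivAt_D := fun x hx => (hD x (Ioo_subset_Icc_self hx)).hasDerivAt (Icc_mem_nhds hx.1 hx.2)
    continuousOn_D := fun x hx => (hD x hx).continuousWithinAt
    D_pos := hD_pos
    D_one := hD1
    continuousOn_z := hz_cont
    hasDerivAt_z := hz_deriv
    z_neg := hz_neg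
    z_one := hz1 }

lemma hasDerivAt_ratio (H : SingularEndpoint h D D' g z c) {x : ℝ} (hx : x ∈ Ioo (0 : ℝ) 1) :
    HasDerivAt (fun t => D t / z t) (ratioPoly g h D' c x (D x / z x) / z x) x := by
  have hzx := (H.z_neg x hx).ne
  refine ((H.hasDerivAt_D x hx).div (H.hasDerivAt_z x hx) hzx).congr_deriv ?_
  simp only [ratioPoly]
  field_simp
  ring

lemma ratio_neg (H : SingularEndpoint h D D' g z c) {x : ℝ} (hx : x ∈ Ioo (0 : ℝ) 1) :
    D x / z x < 0 :=
  div_neg_of_pos_of_neg (H.D_pos x hx) (H.z_neg x hx)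

lemma eventually_ratio_nonpos (H : SingularEndpoint h D D' g z c) :
    ∀ᶠ φ in 𝓝[<] 1, D φ / z φ ≤ 0 :=
  eventually_of_mem (Ioo_mem_nhdsLT zero_lt_one) fun _ hφ => (H.ratio_neg hφ).le

lemma eventually_bounds (H : SingularEndpoint h D D' g z c) : ∃ κ > 0, ∃ C > 0,
    ∀ᶠ t in 𝓝[<] 1, t ∈ Ioo (0 : ℝ) 1 ∧ κ ≤ g t ∧ g t ≤ C ∧ |h t - c| ≤ C ∧ |D' t| ≤ C := by
  have hg1 := H.g_one_pos
  refine ⟨g 1 / 2, half_pos hg1, g 1 + |h 1 - c| + |D' 1| + 1, by positivity, ?_⟩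
  filter_upwards [Ioo_mem_nhdsLT zero_lt_one,
    H.tendsto_g.eventually_const_lt (half_lt_self hg1),
    H.tendsto_g.eventually_lt_const (lt_add_one (g 1)),
    ((H.tendsto_h.sub_const c).abs).eventually_lt_const (lt_add_one |h 1 - c|),
    H.tendsto_D'.abs.eventually_lt_const (lt_add_one |D' 1|)] with t ht hg₁ hg₂ hh hD'
  have := abs_nonneg (h 1 - c)
  have := abs_nonneg (D' 1)
  refine ⟨ht, hg₁.le, ?_, ?_, ?_⟩ <;> linarith

lemma eventually_D_le (H : SingularEndpoint h D D' g z c) {C : ℝ}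
    (hC : ∀ᶠ t in 𝓝[<] 1, |D' t| ≤ C) : ∀ᶠ φ in 𝓝[<] 1, D φ ≤ C * (1 - φ) := by
  filter_upwards [Ioo_mem_nhdsLT zero_lt_one, eventually_forall_Ico_of_eventually_nhdsLT hC]
    with φ hφ hφC
  have := mul_sub_le_sub_of_le_hasDerivAt hφ.2.le
    (H.continuousOn_D.mono (Icc_subset_Icc hφ.1.le le_rfl))
    (fun x hx => H.hasDerivAt_D x ⟨hφ.1.trans hx.1, hx.2⟩)
    (fun x hx => neg_le_of_abs_le (hφC x (Ioo_subset_Ico_self hx)))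
  rw [H.D_one] at this
  linarith

lemma neg_z_le (H : SingularEndpoint h D D' g z c) {φ M C : ℝ} (hφ : φ ∈ Ioo (0 : ℝ) 1)
    (hM : 0 ≤ M)
    (hb : ∀ t ∈ Ioo φ 1, 0 ≤ g t ∧ g t ≤ C ∧ |h t - c| ≤ C ∧ -M ≤ D t / z t) :
    -z φ ≤ C * (1 + M) * (1 - φ) := by
  have := sub_le_mul_sub_of_hasDerivAt_le (C := C * (1 + M)) hφ.2.le
    (H.continuousOn_z.mono (Icc_subset_Icc hφ.1.le le_rfl))
    (fun x hx => H.hasDerivAt_z x ⟨hφ.1.trans hx.1, hx.2⟩) (fun t ht => ?_)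
  · rwa [H.z_one, zero_sub] at this
  obtain ⟨hg₀, hgC, hhC, hu⟩ := hb t ht
  rw [mul_div_right_comm]
  nlinarith [le_abs_self (h t - c), mul_le_mul_of_nonneg_right hu hg₀]

lemma le_neg_z (H : SingularEndpoint h D D' g z c) {φ M κ C : ℝ} (hφ : φ ∈ Ioo (0 : ℝ) 1)
    (hM : 0 ≤ M) (hκ : 0 ≤ κ) (hb : ∀ t ∈ Ioo φ 1, κ ≤ g t ∧ |h t - c| ≤ C ∧ D t / z t ≤ -M) :
    (κ * M - C) * (1 - φ) ≤ -z φ := by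
  have := mul_sub_le_sub_of_le_hasDerivAt (C := κ * M - C) hφ.2.le
    (H.continuousOn_z.mono (Icc_subset_Icc hφ.1.le le_rfl))
    (fun x hx => H.hasDerivAt_z x ⟨hφ.1.trans hx.1, hx.2⟩) (fun t ht => ?_)
  · rwa [H.z_one, zero_sub] at this
  obtain ⟨hκg, hhC, hu⟩ := hb t ht
  rw [mul_div_right_comm]
  nlinarith [neg_abs_le (h t - c), mul_le_mul_of_nonneg_right hκg hM,
    mul_le_mul_of_nonneg_right hu (hκ.trans hκg)]

lemma ratio_le_of_pos (H : SingularEndpoint h D D' g z c) {φ μ : ℝ} (hφ : 0 < φ)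
    (hP : ∀ t ∈ Ico φ 1, 0 < ratioPoly g h D' c t μ) (hμ : D φ / z φ ≤ μ) :
    ∀ t ∈ Ico φ 1, D t / z t ≤ μ :=
  le_of_hasDerivAt_neg_of_eq (fun t ht => H.hasDerivAt_ratio ⟨hφ.trans_le ht.1, ht.2⟩) hμ
    fun t ht hut => by
      rw [hut]; exact div_neg_of_pos_of_neg (hP t ht) (H.z_neg t ⟨hφ.trans_le ht.1, ht.2⟩)

lemma le_ratio_of_neg (H : SingularEndpoint h D D' g z c) {φ μ : ℝ} (hφ : 0 < φ)
    (hP : ∀ t ∈ Ico φ 1, ratioPoly g h D' c t μ < 0) (hμ : μ ≤ D φ / z φ) :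
    ∀ t ∈ Ico φ 1, μ ≤ D t / z t :=
  le_of_hasDerivAt_pos_of_eq (fun t ht => H.hasDerivAt_ratio ⟨hφ.trans_le ht.1, ht.2⟩) hμ
    fun t ht hut => by
      rw [hut]; exact div_pos_of_neg_of_neg (hP t ht) (H.z_neg t ⟨hφ.trans_le ht.1, ht.2⟩)

lemma exists_pos_eventually_forall_le_ratioPoly (H : SingularEndpoint h D D' g z c) {K : Set ℝ}
    (hK : IsCompact K) {s : ℝ} (hs : ∀ v ∈ K, 0 < s * ratioPoly g h D' c 1 v) :
    ∃ δ > 0, ∀ᶠ t in 𝓝[<] 1, ∀ v ∈ K, δ ≤ s * ratioPoly g h D' c t v := by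
  have hF : Continuous (Function.uncurry
      fun (p : ℝ × ℝ × ℝ) (v : ℝ) => s * (p.1 * v ^ 2 - p.2.1 * v + p.2.2)) := by
    fun_prop
  obtain ⟨δ, hδ, hev⟩ := exists_pos_eventually_forall_le hF hK (x₀ := (g 1, h 1 - c, D' 1)) hs
  exact ⟨δ, hδ, (H.tendsto_g.prodMk_nhds ((H.tendsto_h.sub_const c).prodMk_nhds
    H.tendsto_D')).eventually hev⟩

lemma false_of_forall_Ico_abs_ratio_le (H : SingularEndpoint h D D' g z c) {φ R C δ s : ℝ}
    (hφ : φ ∈ Ioo (0 : ℝ) 1) (hδ : 0 < δ)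
    (hb : ∀ t ∈ Ico φ 1, 0 ≤ g t ∧ g t ≤ C ∧ |h t - c| ≤ C ∧ |D t / z t| ≤ R ∧
      δ ≤ s * ratioPoly g h D' c t (D t / z t)) : False := by
  have hR : 0 ≤ R := (abs_nonneg _).trans (hb φ (left_mem_Ico.2 hφ.2)).2.2.2.1
  have hmem : ∀ t ∈ Ico φ 1, t ∈ Ioo (0 : ℝ) 1 := fun t ht => ⟨hφ.1.trans_le ht.1, ht.2⟩
  have hz : ∀ t ∈ Ico φ 1, -z t ≤ C * (1 + R) * (1 - t) := fun t ht =>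
    H.neg_z_le (hmem t ht) hR fun x hx =>
      let ⟨hg₀, hgC, hhC, hu, _⟩ := hb x ⟨ht.1.trans hx.1.le, hx.2⟩
      ⟨hg₀, hgC, hhC, (abs_le.1 hu).1⟩
  have hK : 0 < C * (1 + R) := by
    have := H.z_neg φ hφ
    have := hz φ (left_mem_Ico.2 hφ.2)
    nlinarith [hφ.2]
  -- `(-s u)' = s P / (-z) ≥ δ / (K (1 - t))`, a rate that is not integrable up to `t = 1`
  have hgrow : ∀ t ∈ Ico φ 1,
      δ / (C * (1 + R)) / (1 - t) ≤ -s * (ratioPoly g h D' c t (D t / z t) / z t) := by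
    intro t ht
    have hzt := H.z_neg t (hmem t ht)
    rw [div_div, neg_mul, ← mul_div_assoc, ← div_neg]
    calc δ / (C * (1 + R) * (1 - t)) ≤ δ / -z t :=
          div_le_div_of_nonneg_left hδ.le (neg_pos.2 hzt) (hz t ht)
      _ ≤ s * ratioPoly g h D' c t (D t / z t) / -z t :=
          div_le_div_of_nonneg_right (hb t ht).2.2.2.2 (neg_pos.2 hzt).le
  have hblow := tendsto_atTop_of_div_sub_le_deriv hφ.2 (div_pos hδ hK)
    (fun t ht => (H.hasDerivAt_ratio (hmem t ht)).const_mul (-s)) hgrow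
  have hbdd : ∀ t ∈ Ico φ 1, -s * (D t / z t) ≤ |s| * R := fun t ht => by
    calc -s * (D t / z t) ≤ |-s * (D t / z t)| := le_abs_self _
      _ = |s| * |D t / z t| := by rw [abs_mul, abs_neg]
      _ ≤ |s| * R := mul_le_mul_of_nonneg_left (hb t ht).2.2.2.1 (abs_nonneg s)
  obtain ⟨t, hgt, hle⟩ := ((hblow.eventually_gt_atTop (|s| * R)).and
    (eventually_of_mem (Ico_mem_nhdsLT hφ.2) hbdd)).exists
  exact (hgt.trans_le hle).false

lemma exists_eventually_neg_lt_ratio (H : SingularEndpoint h D D' g z c) :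
    ∃ M, ∀ᶠ φ in 𝓝[<] 1, -M < D φ / z φ := by
  obtain ⟨κ, hκ, C, hC, hbounds⟩ := H.eventually_bounds
  have hDle := H.eventually_D_le (hbounds.mono fun _ ht => ht.2.2.2.2)
  set M := (C + 1) * (1 + 1 / κ) with hMdef
  have hκM : κ * M = (C + 1) * (κ + 1) := by rw [hMdef]; field_simp
  have hM1 : C + 1 ≤ M := le_mul_of_one_le_right (by linarith) (by simp [hκ.le])
  have hM0 : 0 ≤ M := by linarith
  have hM : C < M * (κ * M - C) := by
    have : 1 ≤ κ * M - C := by nlinarith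
    nlinarith
  refine ⟨M, ?_⟩
  filter_upwards [Ioo_mem_nhdsLT zero_lt_one, eventually_forall_Ico_of_eventually_nhdsLT hbounds,
    hDle] with φ hφ hgood hDφ
  by_contra! hle
  have hP : ∀ t ∈ Ico φ 1, 0 < ratioPoly g h D' c t (-M) := fun t ht => by
    obtain ⟨-, hκg, -, hhC, hD'C⟩ := hgood t ht
    simp only [ratioPoly]
    nlinarith [mul_le_mul_of_nonneg_right hκg (sq_nonneg M),
      mul_le_mul_of_nonneg_right (neg_abs_le (h t - c)) hM0, neg_abs_le (D' t)]
  have hstay := H.ratio_le_of_pos hφ.1 hP hle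
  have hz := H.le_neg_z hφ hM0 hκ.le fun t ht =>
    ⟨(hgood t (Ioo_subset_Ico_self ht)).2.1, (hgood t (Ioo_subset_Ico_self ht)).2.2.2.1,
      hstay t (Ioo_subset_Ico_self ht)⟩
  have hzφ := H.z_neg φ hφ
  have hDφ' : M * -z φ ≤ D φ :=
    calc M * -z φ = -M * z φ := by ring
      _ ≤ D φ / z φ * z φ := mul_le_mul_of_nonpos_right hle hzφ.le
      _ = D φ := div_mul_cancel₀ _ hzφ.ne
  nlinarith [mul_le_mul_of_nonneg_left hz hM0, mul_lt_mul_of_pos_right hM (sub_pos.2 hφ.2)]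

lemma eventually_lt_ratio (H : SingularEndpoint h D D' g z c) {μ : ℝ}
    (hμ : ∀ v ≤ μ, 0 < ratioPoly g h D' c 1 v) : ∀ᶠ φ in 𝓝[<] 1, μ < D φ / z φ := by
  obtain ⟨M, hM⟩ := H.exists_eventually_neg_lt_ratio
  rcases lt_or_ge μ (-M) with hμM | hMμ
  · exact hM.mono fun φ hφ => hμM.trans hφ
  obtain ⟨κ, hκ, C, -, hbounds⟩ := H.eventually_bounds
  obtain ⟨δ, hδ, hP⟩ :=
    H.exists_pos_eventually_forall_le_ratioPoly (isCompact_Icc (a := -M) (b := μ))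
    (s := 1) fun v hv => by simpa using hμ v hv.2
  filter_upwards [Ioo_mem_nhdsLT zero_lt_one,
    eventually_forall_Ico_of_eventually_nhdsLT (hbounds.and (hM.and hP))] with φ hφ hgood
  by_contra! hle
  have hstay := H.ratio_le_of_pos hφ.1
    (fun t ht => by simpa using hδ.trans_le ((hgood t ht).2.2 μ ⟨hMμ, le_rfl⟩)) hle
  refine H.false_of_forall_Ico_abs_ratio_le (R := |M| + |μ|) (C := C) (s := 1) hφ hδ fun t ht => ?_
  obtain ⟨⟨-, hκg, hgC, hhC, -⟩, hMt, hPt⟩ := hgood t ht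
  refine ⟨hκ.le.trans hκg, hgC, hhC, abs_le.2 ⟨?_, ?_⟩, hPt _ ⟨hMt.le, hstay t ht⟩⟩
  · linarith [le_abs_self M, abs_nonneg μ]
  · linarith [hstay t ht, le_abs_self μ, abs_nonneg M]

lemma eventually_ratio_lt (H : SingularEndpoint h D D' g z c) {μ b : ℝ}
    (hμ : ∀ v ∈ Icc μ b, ratioPoly g h D' c 1 v < 0) (hb : ∀ᶠ φ in 𝓝[<] 1, D φ / z φ ≤ b) :
    ∀ᶠ φ in 𝓝[<] 1, D φ / z φ < μ := by
  obtain ⟨κ, hκ, C, -, hbounds⟩ := H.eventually_bounds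
  obtain ⟨δ, hδ, hP⟩ :=
    H.exists_pos_eventually_forall_le_ratioPoly (isCompact_Icc (a := μ) (b := b))
    (s := -1) fun v hv => by simpa using hμ v hv
  filter_upwards [Ioo_mem_nhdsLT zero_lt_one,
    eventually_forall_Ico_of_eventually_nhdsLT (hbounds.and (hb.and hP))] with φ hφ hgood
  by_contra! hle
  have hμb : μ ≤ b := hle.trans (hgood φ (left_mem_Ico.2 hφ.2)).2.1
  have hstay := H.le_ratio_of_neg hφ.1
    (fun t ht => by linarith [(hgood t ht).2.2 μ ⟨le_rfl, hμb⟩]) hle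
  refine H.false_of_forall_Ico_abs_ratio_le (R := |μ| + |b|) (C := C) (s := -1) hφ hδ fun t ht => ?_
  obtain ⟨⟨-, hκg, hgC, hhC, -⟩, hbt, hPt⟩ := hgood t ht
  refine ⟨hκ.le.trans hκg, hgC, hhC, abs_le.2 ⟨?_, ?_⟩, hPt _ ⟨hstay t ht, hbt⟩⟩
  · linarith [hstay t ht, neg_abs_le μ, abs_nonneg b]
  · linarith [le_abs_self b, abs_nonneg μ]

lemma eventually_ratio_le (H : SingularEndpoint h D D' g z c) {b : ℝ}
    (hPb : ratioPoly g h D' c 1 b < 0) (hzb : h 1 - c - g 1 * b < 0) :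
    ∀ᶠ φ in 𝓝[<] 1, D φ / z φ ≤ b := by
  obtain ⟨κ, hκ, C, -, hbounds⟩ := H.eventually_bounds
  obtain ⟨δ, hδ, hP⟩ := H.exists_pos_eventually_forall_le_ratioPoly isCompact_singleton
    (s := -1) fun v hv => by rw [mem_singleton_iff.1 hv]; linarith
  have hz' := ((H.tendsto_h.sub_const c).sub (H.tendsto_g.mul_const b)).eventually_lt_const hzb
  filter_upwards [Ioo_mem_nhdsLT zero_lt_one,
    eventually_forall_Ico_of_eventually_nhdsLT (hbounds.and (hP.and hz'))] with φ hφ hgood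
  by_contra! hlt
  have hstay := H.le_ratio_of_neg hφ.1
    (fun t ht => by linarith [(hgood t ht).2.1 b rfl]) hlt.le
  have := sub_le_mul_sub_of_hasDerivAt_le (C := 0) hφ.2.le
    (H.continuousOn_z.mono (Icc_subset_Icc hφ.1.le le_rfl))
    (fun x hx => H.hasDerivAt_z x ⟨hφ.1.trans hx.1, hx.2⟩) fun t ht => ?_
  · linarith [H.z_neg φ hφ, H.z_one]
  obtain ⟨⟨-, hκg, -⟩, -, hzt⟩ := hgood t (Ioo_subset_Ico_self ht)
  rw [mul_div_right_comm]
  nlinarith [mul_le_mul_of_nonneg_left (hstay t (Ioo_subset_Ico_self ht)) (hκ.le.trans hκg)]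

theorem tendsto_ratio (H : SingularEndpoint h D D' g z c) {ℓ b : ℝ}
    (hbelow : ∀ v < ℓ, 0 < ratioPoly g h D' c 1 v)
    (habove : ∀ v ∈ Ioc ℓ b, ratioPoly g h D' c 1 v < 0)
    (hb : ∀ᶠ φ in 𝓝[<] 1, D φ / z φ ≤ b) :
    Tendsto (fun φ => D φ / z φ) (𝓝[<] 1) (𝓝 ℓ) :=
  tendsto_order.2 ⟨fun _ hμ => H.eventually_lt_ratio fun v hv => hbelow v (hv.trans_lt hμ),
    fun _ hμ => H.eventually_ratio_lt (fun v hv => habove v ⟨hμ.trans_le hv.1, hv.2⟩) hb⟩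

end SingularEndpoint

theorem stmt_19_general (h D D' g z : ℝ → ℝ) (c : ℝ)
    -- (f)
    (hh_cont : ContinuousOn h (Icc 0 1))
    -- (D1)
    (hD' : ∀ x ∈ Icc (0:ℝ) 1, HasDerivWithinAt D (D' x) (Icc 0 1) x)
    (hD'_cont : ContinuousOn D' (Icc 0 1))
    (hD_pos : ∀ φ ∈ Ioo (0:ℝ) 1, 0 < D φ)
    (hD1 : D 1 = 0)
    -- (g0)
    (hg_cont : ContinuousOn g (Icc 0 1))
    (hg_pos : ∀ φ ∈ Ioc (0:ℝ) 1, 0 < g φ)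
    -- threshold and solution
    (hz : PC00 h (fun φ => D φ * g φ) c z) :
    (D' 1 < 0 →
      Tendsto (fun φ => D φ / z φ) (𝓝[<] (1:ℝ))
        (𝓝 ((h 1 - c - Real.sqrt ((h 1 - c) ^ 2 - 4 * D' 1 * g 1)) / (2 * g 1)))) ∧
    (D' 1 = 0 →
      Tendsto (fun φ => D φ / z φ) (𝓝[<] (1:ℝ))
        (𝓝 (min 0 ((h 1 - c) / g 1)))) := by
  have H := SingularEndpoint.of_PC00 hh_cont hD' hD'_cont hD_pos hD1 hg_cont
    (hg_pos 1 (right_mem_Ioc.2 zero_lt_one)) hz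
  have hg1 := H.g_one_pos
  refine ⟨fun hD'1 => ?_, fun hD'1 => ?_⟩
  · obtain ⟨hbelow, habove⟩ := quadratic_sign_of_const_neg (b := h 1 - c) hg1 hD'1
    exact H.tendsto_ratio hbelow habove H.eventually_ratio_nonpos
  have hP : ∀ v, ratioPoly g h D' c 1 v = v * (g 1 * v - (h 1 - c)) := fun v => by
    rw [ratioPoly, hD'1]; ring
  rcases le_or_gt 0 (h 1 - c) with hc | hc
  · rw [min_eq_left (div_nonneg hc hg1.le)]
    refine H.tendsto_ratio (fun v hv => ?_) (by simp) H.eventually_ratio_nonpos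
    rw [hP]
    exact mul_pos_of_neg_of_neg hv (by linarith [mul_neg_of_pos_of_neg hg1 hv])
  set ℓ := (h 1 - c) / g 1
  have hℓ : ℓ < 0 := div_neg_of_neg_of_pos hc hg1
  have hgℓ : g 1 * ℓ = h 1 - c := mul_div_cancel₀ _ hg1.ne'
  have hgℓ₂ : g 1 * (ℓ / 2) = (h 1 - c) / 2 := by linear_combination hgℓ / 2
  rw [min_eq_right hℓ.le]
  refine H.tendsto_ratio (b := ℓ / 2) (fun v hv => ?_) (fun v hv => ?_)
    (H.eventually_ratio_le ?_ (by linarith))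
  all_goals rw [hP]
  · exact mul_pos_of_neg_of_neg (by linarith) (by linarith [mul_lt_mul_of_pos_left hv hg1])
  · exact mul_neg_of_neg_of_pos (by linarith [hv.2])
      (by linarith [mul_lt_mul_of_pos_left hv.1 hg1])
  · exact mul_neg_of_neg_of_pos (by linarith) (by linarith)

/-- behavior of D(φ)/z(φ) as φ → 1⁻ for the solution z of
(P_c⁰⁰) with q = D·g, under (f), (D1), (g0), (Dg). -/
theorem stmt_19 (f h D D' g z : ℝ → ℝ) (cstar c : ℝ)
    -- (f)
    (hf0 : f 0 = 0)
    (hf' : ∀ x ∈ Icc (0:ℝ) 1, HasDerivWithinAt f (h x) (Icc 0 1) x)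
    (hh_cont : ContinuousOn h (Icc 0 1))
    -- (D1)
    (hD' : ∀ x ∈ Icc (0:ℝ) 1, HasDerivWithinAt D (D' x) (Icc 0 1) x)
    (hD'_cont : ContinuousOn D' (Icc 0 1))
    (hD_pos : ∀ φ ∈ Ioo (0:ℝ) 1, 0 < D φ)
    (hD1 : D 1 = 0)
    -- (g0)
    (hg_cont : ContinuousOn g (Icc 0 1))
    (hg_pos : ∀ φ ∈ Ioc (0:ℝ) 1, 0 < g φ)
    (hg0 : g 0 = 0)
    -- (Dg)
    (hDg : ∃ L : ℝ, ∀ᶠ φ in 𝓝[>] (0:ℝ), D φ * g φ / φ ≤ L)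
    -- threshold and solution
    (hcstar : ∀ c' : ℝ, (∃ w : ℝ → ℝ, PC00 h (fun φ => D φ * g φ) c' w) ↔ cstar ≤ c')
    (hc : cstar ≤ c)
    (hz : PC00 h (fun φ => D φ * g φ) c z) :
    (D' 1 < 0 →
      Tendsto (fun φ => D φ / z φ) (𝓝[<] (1:ℝ))
        (𝓝 ((h 1 - c - Real.sqrt ((h 1 - c) ^ 2 - 4 * D' 1 * g 1)) / (2 * g 1)))) ∧
    (D' 1 = 0 →
      Tendsto (fun φ => D φ / z φ) (𝓝[<] (1:ℝ))
        (𝓝 (min 0 ((h 1 - c) / g 1)))) :=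
  stmt_19_general h D D' g z c hh_cont hD' hD'_cont hD_pos hD1 hg_cont hg_pos hz
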